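/- Define D_{n,k} = sup{ ‖x‖_n / ‖x‖_k : x ∈ c00, ‖x‖_{ℓ1} = 1 } ∈ [0,∞] for n, k ∈ ℕ. Then: (1) D_{n,k} ≤ 1 whenever n ≤ k; (2) D_{n,k} ≥ k whenever n > k. -/

import Mathlib

/-- The ℓ¹-norm on `c00 = ℕ →₀ ℝ`. -/
noncomputable def l1 (x : ℕ →₀ ℝ) : ℝ := ∑ n ∈ x.support, |x n|

/-- `restr E x = Ex`, the restriction of `x` to the finite set `E`. -/
noncomputable def restr (E : Finset ℕ) (x : ℕ →₀ ℝ) : ℕ →₀ ℝ :=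
  x.filter (fun n => n ∈ E)

/-- `Admissible n Es` says that `E_1, …, E_n` are finite nonempty subsets of ℕ
with `n ≤ E_1 < E_2 < ⋯ < E_n`. -/
def Admissible (n : ℕ) (Es : Fin n → Finset ℕ) : Prop :=
  0 < n ∧ (∀ i, (Es i).Nonempty) ∧
    (∀ i : Fin n, ∀ a ∈ Es i, n ≤ a) ∧
    (∀ i j : Fin n, i < j → ∀ a ∈ Es i, ∀ b ∈ Es j, a < b)

/-- The Tsirelson iterate norms `‖·‖_k`. -/
noncomputable def tsir : ℕ → (ℕ →₀ ℝ) → ℝ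
  | 0, x => ⨆ n, |x n|
  | (k + 1), x => max (tsir k x)
      (sSup { r : ℝ | ∃ n : ℕ, ∃ Es : Fin n → Finset ℕ, Admissible n Es ∧
        r = (1 / 2) * ∑ i, tsir k (restr (Es i) x) })

open scoped ENNReal

/-- `D_{n,k} = sup { ‖x‖_n / ‖x‖_k : x ∈ c00, ‖x‖_{ℓ1} = 1 }`, valued in `[0,∞]`. -/
noncomputable def Dnk (n k : ℕ) : ℝ≥0∞ :=
  ⨆ x : { x : ℕ →₀ ℝ // l1 x = 1 }, ENNReal.ofReal (tsir n x / tsir k x)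

/-!
For `n ≤ k` the iterates increase with `k`, so the ratio is at most `1`.

For the lower bound, `‖x‖_j` is dominated by the Schreier norm
`max {∑_{s ∈ F} |x s| : F ∈ S_j}`, while repeated averages separate consecutive levels.
Take `N ≥ 2 (M + 1)` successive blocks `u_0 < ⋯ < u_{N-1}` of ℓ¹-norm one, all beyond `N`,
where `u_i` starts at `A_i`, has `‖u_i‖_{j+1} ≥ 2^{-(j+1)}` and `S_j`-sums at most
`1 / (N A_i)`. Their supports form an admissible family, so the average has
`‖·‖_{j+2} ≥ 2^{-(j+2)}`. A set `F ∈ S_{j+1}` sees nothing before the block containing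
`min F`, at most `1` in that block, and meets each later block `u_i` in at most
`min F < A_i` pieces from `S_j`, hence sees at most `1 / N` there. So the average has
`S_{j+1}`-sums at most `2 / N ≤ 1 / M`. With `M = 2^{k+1} k` this gives
`‖x‖_{k+1} ≥ k ‖x‖_k`.
-/

open Finset Function

lemma sum_abs_le_l1 (x : ℕ →₀ ℝ) (F : Finset ℕ) : ∑ s ∈ F, |x s| ≤ l1 x :=
  calc ∑ s ∈ F, |x s| ≤ ∑ s ∈ F ∪ x.support, |x s| :=
        sum_le_sum_of_subset_of_nonneg subset_union_left fun _ _ _ => abs_nonneg _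
    _ = l1 x := (sum_subset subset_union_right fun s _ hs => by
        simp [Finsupp.notMem_support_iff.mp hs]).symm

lemma l1_eq_sum_of_support_subset {x : ℕ →₀ ℝ} {S : Finset ℕ} (h : x.support ⊆ S) :
    l1 x = ∑ s ∈ S, |x s| :=
  sum_subset h fun s _ hs => by simp [Finsupp.notMem_support_iff.mp hs]

lemma l1_single_one (s : ℕ) : l1 (Finsupp.single s 1) = 1 := by
  simp [l1]

lemma ne_zero_of_l1_eq_one {x : ℕ →₀ ℝ} (hx : l1 x = 1) : x ≠ 0 := by
  rintro rfl
  simp [l1] at hx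

lemma restr_apply (E : Finset ℕ) (x : ℕ →₀ ℝ) (s : ℕ) :
    restr E x s = if s ∈ E then x s else 0 := by
  simp [restr, Finsupp.filter_apply]

lemma mem_support_restr {E : Finset ℕ} {x : ℕ →₀ ℝ} {s : ℕ} :
    s ∈ (restr E x).support ↔ s ∈ x.support ∧ s ∈ E := by
  simp [restr, Finsupp.support_filter]

lemma restr_smul (E : Finset ℕ) (c : ℝ) (x : ℕ →₀ ℝ) :
    restr E (c • x) = c • restr E x := by
  ext s
  by_cases h : s ∈ E <;> simp [restr_apply, h]

lemma pairwise_disjoint_of_lt {ι : Type*} [LinearOrder ι] {F : ι → Finset ℕ}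
    (h : ∀ i i', i < i' → ∀ a ∈ F i, ∀ b ∈ F i', a < b) : Pairwise (Disjoint on F) := by
  intro i i' hne
  refine disjoint_left.2 fun a ha ha' => ?_
  rcases hne.lt_or_gt with hlt | hlt
  · exact lt_irrefl a (h i i' hlt a ha a ha')
  · exact lt_irrefl a (h i' i hlt a ha' a ha)

/-- The Schreier families `S_j`. The pieces `F_i` may be empty, so that sets chosen piecewise
along an admissible family can be united without discarding any. -/
def schreier : ℕ → Finset ℕ → Prop
  | 0, F => F.card ≤ 1
  | j + 1, F => schreier j F ∨ ∃ n, ∃ Fs : Fin n → Finset ℕ,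
      (∀ i, schreier j (Fs i)) ∧ (∀ i i', i < i' → ∀ a ∈ Fs i, ∀ b ∈ Fs i', a < b) ∧
      (∀ a ∈ F, n ≤ a) ∧ F = univ.biUnion Fs

lemma schreier_empty : ∀ j, schreier j ∅
  | 0 => by simp [schreier]
  | j + 1 => Or.inl (schreier_empty j)

lemma schreier_succ_biUnion {j m : ℕ} {Es Fs : Fin m → Finset ℕ} (hEs : Admissible m Es)
    (hsub : ∀ i, Fs i ⊆ Es i) (hFs : ∀ i, schreier j (Fs i)) :
    schreier (j + 1) (univ.biUnion Fs) := by
  refine Or.inr ⟨m, Fs, hFs,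
    fun i i' h a ha b hb => hEs.2.2.2 i i' h a (hsub i ha) b (hsub i' hb), fun a ha => ?_, rfl⟩
  obtain ⟨i, -, hai⟩ := mem_biUnion.1 ha
  exact hEs.2.2.1 i a (hsub i hai)

open Classical in
noncomputable def schreierNorm (j : ℕ) (x : ℕ →₀ ℝ) : ℝ :=
  (x.support.powerset.filter (schreier j)).sup' ⟨∅, by simp [schreier_empty]⟩
    fun F => ∑ s ∈ F, |x s|

lemma le_schreierNorm {j : ℕ} {x : ℕ →₀ ℝ} {F : Finset ℕ} (hF : F ⊆ x.support)
    (hS : schreier j F) : ∑ s ∈ F, |x s| ≤ schreierNorm j x :=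
  le_sup' (fun F => ∑ s ∈ F, |x s|) (by simp [hF, hS])

lemma exists_sum_eq_schreierNorm (j : ℕ) (x : ℕ →₀ ℝ) :
    ∃ F ⊆ x.support, schreier j F ∧ schreierNorm j x = ∑ s ∈ F, |x s| := by
  classical
  obtain ⟨F, hF, heq⟩ := exists_mem_eq_sup' (s := x.support.powerset.filter (schreier j))
    ⟨∅, by simp [schreier_empty]⟩ fun F => ∑ s ∈ F, |x s|
  simp only [mem_filter, mem_powerset] at hF
  exact ⟨F, hF.1, hF.2, by rw [schreierNorm, ← heq]⟩

lemma schreierNorm_nonneg (j : ℕ) (x : ℕ →₀ ℝ) : 0 ≤ schreierNorm j x := by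
  simpa using le_schreierNorm (empty_subset x.support) (schreier_empty j)

lemma schreierNorm_le_succ (j : ℕ) (x : ℕ →₀ ℝ) :
    schreierNorm j x ≤ schreierNorm (j + 1) x := by
  obtain ⟨F, hF, hS, heq⟩ := exists_sum_eq_schreierNorm j x
  exact heq ▸ le_schreierNorm hF (Or.inl hS)

lemma sum_schreierNorm_restr_le {j m : ℕ} {Es : Fin m → Finset ℕ} (hEs : Admissible m Es)
    (x : ℕ →₀ ℝ) : ∑ i, schreierNorm j (restr (Es i) x) ≤ schreierNorm (j + 1) x := by
  classical
  choose Fs hFs hS heq using fun i => exists_sum_eq_schreierNorm j (restr (Es i) x)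
  have hsub : ∀ i, Fs i ⊆ Es i ∩ x.support := fun i s hs => by
    obtain ⟨h1, h2⟩ := mem_support_restr.1 (hFs i hs)
    exact mem_inter.2 ⟨h2, h1⟩
  have hdisj : Pairwise (Disjoint on Fs) := pairwise_disjoint_of_lt fun i i' h a ha b hb =>
    hEs.2.2.2 i i' h a (mem_inter.1 (hsub i ha)).1 b (mem_inter.1 (hsub i' hb)).1
  calc ∑ i, schreierNorm j (restr (Es i) x) = ∑ i, ∑ s ∈ Fs i, |x s| := by
        refine sum_congr rfl fun i _ => (heq i).trans (sum_congr rfl fun s hs => ?_)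
        rw [restr_apply, if_pos (mem_inter.1 (hsub i hs)).1]
    _ = ∑ s ∈ univ.biUnion Fs, |x s| := (sum_biUnion (hdisj.set_pairwise _)).symm
    _ ≤ schreierNorm (j + 1) x :=
        le_schreierNorm (biUnion_subset.2 fun i _ => (hsub i).trans inter_subset_right)
          (schreier_succ_biUnion hEs (fun i => (hsub i).trans inter_subset_left) hS)

lemma half_sum_restr_le_schreierNorm {j m : ℕ} {f : (ℕ →₀ ℝ) → ℝ}
    (hf : ∀ y, f y ≤ schreierNorm j y) {Es : Fin m → Finset ℕ} (hEs : Admissible m Es)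
    (x : ℕ →₀ ℝ) : 1 / 2 * ∑ i, f (restr (Es i) x) ≤ schreierNorm (j + 1) x :=
  calc 1 / 2 * ∑ i, f (restr (Es i) x) ≤ 1 / 2 * ∑ i, schreierNorm j (restr (Es i) x) := by
        gcongr with i; exact hf _
    _ ≤ 1 / 2 * schreierNorm (j + 1) x := by gcongr; exact sum_schreierNorm_restr_le hEs x
    _ ≤ schreierNorm (j + 1) x := by linarith [schreierNorm_nonneg (j + 1) x]

lemma mul_sum_abs_le_of_schreier_succ {u : ℕ →₀ ℝ} {j A : ℕ} {M : ℝ} {F : Finset ℕ}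
    (hu : ∀ G, schreier j G → M * ∑ s ∈ G, |u s| ≤ 1) (hA : 1 ≤ A)
    (hF : schreier (j + 1) F) (hFA : ∃ s ∈ F, s < A) : M * ∑ s ∈ F, |u s| ≤ A := by
  rcases hF with hF | ⟨n, Fs, hFs, hlt, hn, rfl⟩
  · exact (hu F hF).trans (by exact_mod_cast hA)
  · obtain ⟨s, hs, hsA⟩ := hFA
    rw [sum_biUnion ((pairwise_disjoint_of_lt hlt).set_pairwise _), mul_sum]
    calc ∑ l, M * ∑ s ∈ Fs l, |u s| ≤ ∑ _l : Fin n, (1 : ℝ) :=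
          sum_le_sum fun l _ => hu _ (hFs l)
      _ = n := by simp
      _ ≤ A := by exact_mod_cast (hn s hs).trans hsA.le

lemma abs_le_tsir_zero (x : ℕ →₀ ℝ) (s : ℕ) : |x s| ≤ tsir 0 x :=
  le_ciSup ⟨l1 x, by rintro _ ⟨t, rfl⟩; simpa using sum_abs_le_l1 x {t}⟩ s

lemma tsir_le_schreierNorm (j : ℕ) (x : ℕ →₀ ℝ) : tsir j x ≤ schreierNorm j x := by
  induction j generalizing x with
  | zero =>
    refine ciSup_le fun s => ?_
    by_cases hs : s ∈ x.support
    · simpa using le_schreierNorm (singleton_subset_iff.2 hs) (by simp [schreier] : schreier 0 {s})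
    · simpa [Finsupp.notMem_support_iff.mp hs] using schreierNorm_nonneg 0 x
  | succ j ih =>
    rw [tsir]
    refine max_le ((ih x).trans (schreierNorm_le_succ j x))
      (Real.sSup_le ?_ (schreierNorm_nonneg _ x))
    rintro r ⟨m, Es, hEs, rfl⟩
    exact half_sum_restr_le_schreierNorm ih hEs x

lemma tsir_mono (x : ℕ →₀ ℝ) : Monotone fun j => tsir j x :=
  monotone_nat_of_le_succ fun j => by rw [tsir]; exact le_max_left _ _

lemma tsir_nonneg (j : ℕ) (x : ℕ →₀ ℝ) : 0 ≤ tsir j x :=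
  (abs_nonneg (x 0)).trans <| (abs_le_tsir_zero x 0).trans <| tsir_mono x j.zero_le

lemma tsir_pos {x : ℕ →₀ ℝ} (hx : x ≠ 0) (j : ℕ) : 0 < tsir j x := by
  obtain ⟨s, hs⟩ := Finsupp.support_nonempty_iff.2 hx
  exact (abs_pos.2 (Finsupp.mem_support_iff.1 hs)).trans_le <|
    (abs_le_tsir_zero x s).trans (tsir_mono x j.zero_le)

lemma tsir_smul (j : ℕ) {c : ℝ} (hc : 0 ≤ c) (x : ℕ →₀ ℝ) :
    tsir j (c • x) = c * tsir j x := by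
  induction j generalizing x with
  | zero =>
    simp only [tsir, Finsupp.smul_apply, smul_eq_mul, abs_mul, abs_of_nonneg hc]
    exact (Real.mul_iSup_of_nonneg hc _).symm
  | succ j ih =>
    rw [tsir, tsir, ih, mul_max_of_nonneg _ _ hc, ← smul_eq_mul c (sSup _),
      ← Real.sSup_smul_of_nonneg hc]
    congr 2
    ext r
    simp only [Set.mem_ofPred_eq, Set.mem_smul_set, restr_smul, ih, ← mul_sum, smul_eq_mul]
    constructor
    · rintro ⟨n, Es, hEs, rfl⟩
      exact ⟨_, ⟨n, Es, hEs, rfl⟩, by ring⟩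
    · rintro ⟨_, ⟨n, Es, hEs, rfl⟩, rfl⟩
      exact ⟨n, Es, hEs, by ring⟩

lemma le_tsir_succ {j n : ℕ} {Es : Fin n → Finset ℕ} (hEs : Admissible n Es)
    (x : ℕ →₀ ℝ) :
    1 / 2 * ∑ i, tsir j (restr (Es i) x) ≤ tsir (j + 1) x := by
  have hbdd : BddAbove {r : ℝ | ∃ n : ℕ, ∃ Es : Fin n → Finset ℕ, Admissible n Es ∧
      r = 1 / 2 * ∑ i, tsir j (restr (Es i) x)} := by
    refine ⟨schreierNorm (j + 1) x, ?_⟩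
    rintro r ⟨m, Fs, hFs, rfl⟩
    exact half_sum_restr_le_schreierNorm (tsir_le_schreierNorm j) hFs x
  rw [tsir]
  exact le_max_of_le_right (le_csSup hbdd ⟨n, Es, hEs, rfl⟩)

noncomputable def average (N : ℕ) (u : ℕ → ℕ →₀ ℝ) : ℕ →₀ ℝ :=
  (N : ℝ)⁻¹ • ∑ i ∈ range N, u i

def SupportedInBlocks (A : ℕ → ℕ) (u : ℕ → ℕ →₀ ℝ) : Prop :=
  ∀ i, ∀ s ∈ (u i).support, A i ≤ s ∧ s < A (i + 1)

section Average

variable {N : ℕ} {A : ℕ → ℕ} {u : ℕ → ℕ →₀ ℝ}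

lemma average_apply (N : ℕ) (u : ℕ → ℕ →₀ ℝ) (s : ℕ) :
    average N u s = (N : ℝ)⁻¹ * ∑ i ∈ range N, u i s := by
  simp [average]

lemma support_average_subset : (average N u).support ⊆ (range N).biUnion fun i => (u i).support :=
  Finsupp.support_smul.trans Finsupp.support_finsetSum

lemma lt_of_mem_support_blocks (hA : Monotone A) (hu : SupportedInBlocks A u)
    {i i' : ℕ} (h : i < i') {s s' : ℕ} (hs : s ∈ (u i).support)
    (hs' : s' ∈ (u i').support) : s < s' :=
  (hu i s hs).2.trans_le <| (hA h).trans (hu i' s' hs').1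

lemma le_of_mem_support_average (hA : Monotone A) (hu : SupportedInBlocks A u)
    {s : ℕ} (hs : s ∈ (average N u).support) : A 0 ≤ s := by
  obtain ⟨i, -, hsi⟩ := mem_biUnion.1 (support_average_subset hs)
  exact (hA i.zero_le).trans (hu i s hsi).1

lemma average_apply_of_mem_support (hA : Monotone A) (hu : SupportedInBlocks A u)
    {i s : ℕ} (hi : i < N) (hs : s ∈ (u i).support) :
    average N u s = (N : ℝ)⁻¹ * u i s := by
  rw [average_apply, sum_eq_single_of_mem i (mem_range.2 hi)]
  intro l _ hl
  refine Finsupp.notMem_support_iff.1 fun hsl => lt_irrefl s ?_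
  rcases hl.lt_or_gt with h | h
  · exact lt_of_mem_support_blocks hA hu h hsl hs
  · exact lt_of_mem_support_blocks hA hu h hs hsl

lemma l1_average (hA : Monotone A) (hu : SupportedInBlocks A u)
    (hl1 : ∀ i, l1 (u i) = 1) (hN : 0 < N) : l1 (average N u) = 1 := by
  have hdisj : Pairwise (Disjoint on fun i => (u i).support) :=
    pairwise_disjoint_of_lt fun _ _ h _ hs _ hs' => lt_of_mem_support_blocks hA hu h hs hs'
  rw [l1_eq_sum_of_support_subset support_average_subset, sum_biUnion (hdisj.set_pairwise _)]
  calc ∑ i ∈ range N, ∑ s ∈ (u i).support, |average N u s|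
      = ∑ i ∈ range N, (N : ℝ)⁻¹ * l1 (u i) := by
        refine sum_congr rfl fun i hi => ?_
        rw [l1, mul_sum]
        refine sum_congr rfl fun s hs => ?_
        rw [average_apply_of_mem_support hA hu (mem_range.1 hi) hs, abs_mul,
          abs_of_nonneg (by positivity)]
    _ = 1 := by simp [hl1, hN.ne']

lemma restr_support_average (hA : Monotone A) (hu : SupportedInBlocks A u)
    {i : ℕ} (hi : i < N) :
    restr (u i).support (average N u) = (N : ℝ)⁻¹ • u i := by
  ext s
  by_cases hs : s ∈ (u i).support
  · simp [restr_apply, hs, average_apply_of_mem_support hA hu hi hs]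
  · simp [restr_apply, hs, Finsupp.notMem_support_iff.1 hs]

lemma admissible_support_blocks (hA : Monotone A) (hu : SupportedInBlocks A u)
    (hne : ∀ i, u i ≠ 0) (hN : 0 < N) (hNA : N ≤ A 0) :
    Admissible N fun i : Fin N => (u i).support :=
  ⟨hN, fun i => Finsupp.support_nonempty_iff.2 (hne i),
    fun i s hs => hNA.trans <| (hA i.val.zero_le).trans (hu i s hs).1,
    fun _ _ h _ hs _ hs' => lt_of_mem_support_blocks hA hu h hs hs'⟩

lemma le_tsir_succ_average {j : ℕ} (hA : Monotone A) (hu : SupportedInBlocks A u)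
    (hne : ∀ i, u i ≠ 0) (hN : 0 < N) (hNA : N ≤ A 0) {c : ℝ}
    (hc : ∀ i, c ≤ tsir j (u i)) :
    c / 2 ≤ tsir (j + 1) (average N u) := by
  calc c / 2 = 1 / 2 * ∑ _i : Fin N, (N : ℝ)⁻¹ * c := by
        simp only [sum_const, card_univ, Fintype.card_fin, nsmul_eq_mul]
        field_simp
    _ ≤ 1 / 2 * ∑ i : Fin N, tsir j (restr (u i).support (average N u)) := by
        gcongr with i
        rw [restr_support_average hA hu i.isLt, tsir_smul j (by positivity)]
        gcongr
        exact hc i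
    _ ≤ tsir (j + 1) (average N u) :=
        le_tsir_succ (admissible_support_blocks hA hu hne hN hNA) _

lemma abs_average_le (hA : Monotone A) (hu : SupportedInBlocks A u)
    (hl1 : ∀ i, l1 (u i) = 1) (s : ℕ) : |average N u s| ≤ (N : ℝ)⁻¹ := by
  by_cases hs : s ∈ (average N u).support
  · obtain ⟨i, hi, hsi⟩ := mem_biUnion.1 (support_average_subset hs)
    rw [average_apply_of_mem_support hA hu (mem_range.1 hi) hsi, abs_mul,
      abs_of_nonneg (by positivity)]
    simpa [hl1 i] using mul_le_mul_of_nonneg_left (sum_abs_le_l1 (u i) {s})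
      (inv_nonneg.2 (N.cast_nonneg : (0 : ℝ) ≤ N))
  · simp [Finsupp.notMem_support_iff.1 hs]

lemma sum_abs_average_le (N : ℕ) (u : ℕ → ℕ →₀ ℝ) (F : Finset ℕ) :
    ∑ s ∈ F, |average N u s| ≤ (N : ℝ)⁻¹ * ∑ i ∈ range N, ∑ s ∈ F, |u i s| := by
  rw [sum_comm, mul_sum]
  refine sum_le_sum fun s _ => ?_
  rw [average_apply, abs_mul, abs_of_nonneg (by positivity)]
  gcongr
  exact abs_sum_le_sum_abs _ _

lemma card_filter_blocks_le_one (hA : Monotone A) (F t : Finset ℕ) :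
    (t.filter fun i => (∀ s ∈ F, A i ≤ s) ∧ ∃ s ∈ F, s < A (i + 1)).card ≤ 1 := by
  refine card_le_one.2 fun i hi i' hi' => ?_
  simp only [mem_filter] at hi hi'
  by_contra hne
  rcases Ne.lt_or_gt hne with h | h
  · obtain ⟨s, hs, hslt⟩ := hi.2.2
    exact (hslt.trans_le (hA h)).not_ge (hi'.2.1 s hs)
  · obtain ⟨s, hs, hslt⟩ := hi'.2.2
    exact (hslt.trans_le (hA h)).not_ge (hi.2.1 s hs)

lemma sum_abs_block_le {j : ℕ} (hA : Monotone A) (hu : SupportedInBlocks A u)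
    (hl1 : ∀ i, l1 (u i) = 1) (hN : 0 < N) (hA1 : 1 ≤ A 0)
    (hS : ∀ i G, schreier j G → ((N : ℝ) * A i) * ∑ s ∈ G, |u i s| ≤ 1)
    {F : Finset ℕ} (hF : schreier (j + 1) F) (i : ℕ) :
    ∑ s ∈ F, |u i s| ≤
      (N : ℝ)⁻¹ + if (∀ s ∈ F, A i ≤ s) ∧ ∃ s ∈ F, s < A (i + 1) then 1 else 0 := by
  have hAi : (0 : ℝ) < A i := by exact_mod_cast one_pos.trans_le (hA1.trans (hA i.zero_le))
  have hite : (0 : ℝ) ≤ if (∀ s ∈ F, A i ≤ s) ∧ ∃ s ∈ F, s < A (i + 1) then 1 else 0 :=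
    by split_ifs <;> norm_num
  by_cases hlow : ∃ s ∈ F, s < A i
  · have h := mul_sum_abs_le_of_schreier_succ (hS i) (hA1.trans (hA i.zero_le)) hF hlow
    have h' : (A i : ℝ) * (N * ∑ s ∈ F, |u i s|) ≤ A i * 1 := by linarith
    have : ∑ s ∈ F, |u i s| ≤ (N : ℝ)⁻¹ := by
      rw [inv_eq_one_div, le_div_iff₀' (by exact_mod_cast hN)]
      exact le_of_mul_le_mul_left h' hAi
    linarith
  push Not at hlow
  by_cases hup : ∃ s ∈ F, s < A (i + 1)
  · rw [if_pos ⟨hlow, hup⟩]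
    linarith [sum_abs_le_l1 (u i) F, hl1 i, inv_nonneg.2 (N.cast_nonneg : (0 : ℝ) ≤ N)]
  · push Not at hup
    have : ∑ s ∈ F, |u i s| = 0 := sum_eq_zero fun s hs => by
      rw [Finsupp.notMem_support_iff.1 fun h => (hu i s h).2.not_ge (hup s hs), abs_zero]
    rw [this]
    positivity

lemma mul_sum_abs_average_le_two {j : ℕ} (hA : Monotone A) (hu : SupportedInBlocks A u)
    (hl1 : ∀ i, l1 (u i) = 1) (hN : 0 < N) (hA1 : 1 ≤ A 0)
    (hS : ∀ i G, schreier j G → ((N : ℝ) * A i) * ∑ s ∈ G, |u i s| ≤ 1)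
    {F : Finset ℕ} (hF : schreier (j + 1) F) :
    (N : ℝ) * ∑ s ∈ F, |average N u s| ≤ 2 := by
  have hN' : (0 : ℝ) < N := by exact_mod_cast hN
  calc (N : ℝ) * ∑ s ∈ F, |average N u s|
      ≤ N * ((N : ℝ)⁻¹ * ∑ i ∈ range N, ∑ s ∈ F, |u i s|) := by
        gcongr; exact sum_abs_average_le N u F
    _ = ∑ i ∈ range N, ∑ s ∈ F, |u i s| := by field_simp
    _ ≤ ∑ i ∈ range N, ((N : ℝ)⁻¹ +
          if (∀ s ∈ F, A i ≤ s) ∧ ∃ s ∈ F, s < A (i + 1) then 1 else 0) :=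
        sum_le_sum fun i _ => sum_abs_block_le hA hu hl1 hN hA1 hS hF i
    _ ≤ 2 := by
        rw [sum_add_distrib, sum_boole, sum_const, card_range, nsmul_eq_mul,
          mul_inv_cancel₀ hN'.ne']
        linarith [(Nat.cast_le_one (α := ℝ)).2 (card_filter_blocks_le_one hA F (range N))]

end Average

def SeparatesLevels (j a M : ℕ) (x : ℕ →₀ ℝ) : Prop :=
  (∀ s ∈ x.support, a ≤ s) ∧ l1 x = 1 ∧ (1 / 2 : ℝ) ^ (j + 1) ≤ tsir (j + 1) x ∧
    ∀ F, schreier j F → (M : ℝ) * ∑ s ∈ F, |x s| ≤ 1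

lemma exists_separatesLevels_zero (a M : ℕ) : ∃ x, SeparatesLevels 0 a M x := by
  set N := M + 1
  set A : ℕ → ℕ := fun i => max a N + i
  set u : ℕ → ℕ →₀ ℝ := fun i => Finsupp.single (A i) 1
  have hA : Monotone A := fun _ _ h => Nat.add_le_add_left h _
  have hu : SupportedInBlocks A u := fun i s hs => by
    rw [Finsupp.support_single _ one_ne_zero, mem_singleton] at hs
    simp [hs, A]
  have hl1 : ∀ i, l1 (u i) = 1 := fun i => l1_single_one (A i)
  have hN : 0 < N := M.succ_pos
  refine ⟨average N u, fun s hs => (le_max_left a N).trans (le_of_mem_support_average hA hu hs),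
    l1_average hA hu hl1 hN, ?_, fun F hF => ?_⟩
  · have hc : ∀ i, 1 ≤ tsir 0 (u i) := fun i => by
      simpa [u] using abs_le_tsir_zero (u i) (A i)
    simpa using le_tsir_succ_average hA hu (fun i => ne_zero_of_l1_eq_one (hl1 i)) hN
      (le_max_right a N) hc
  · have hF : (F.card : ℝ) ≤ 1 := by exact_mod_cast hF
    calc (M : ℝ) * ∑ s ∈ F, |average N u s| ≤ M * (F.card * (N : ℝ)⁻¹) := by
          gcongr
          simpa using sum_le_card_nsmul F _ _ fun s _ => abs_average_le hA hu hl1 s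
      _ ≤ M * (N : ℝ)⁻¹ := by gcongr; exact mul_le_of_le_one_left (by positivity) hF
      _ ≤ 1 := by
          rw [← div_eq_mul_inv, div_le_one (by positivity)]
          simp [N]

lemma exists_separatesLevels_succ {j : ℕ} (ih : ∀ a M, ∃ x, SeparatesLevels j a M x)
    (a M : ℕ) : ∃ x, SeparatesLevels (j + 1) a M x := by
  choose v hv_supp hv_l1 hv_tsir hv_S using ih
  set N := 2 * (M + 1)
  -- block `i` starts at `A i` and has `S_j`-sums at most `1 / (N * A i)`
  obtain ⟨A, hA0, hA_succ⟩ : ∃ A : ℕ → ℕ, A 0 = max a N ∧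
      ∀ i, A (i + 1) = A i + (v (A i) (N * A i)).support.sup id + 1 :=
    ⟨fun i => Nat.rec (max a N) (fun _ b => b + (v b (N * b)).support.sup id + 1) i,
      rfl, fun _ => rfl⟩
  set u : ℕ → ℕ →₀ ℝ := fun i => v (A i) (N * A i)
  have hA : Monotone A := monotone_nat_of_le_succ fun i => by rw [hA_succ]; omega
  have hu : SupportedInBlocks A u := fun i s hs => by
    refine ⟨hv_supp _ _ s hs, ?_⟩
    have : s ≤ (v (A i) (N * A i)).support.sup id := le_sup (f := id) hs
    rw [hA_succ]
    omega
  have hl1 : ∀ i, l1 (u i) = 1 := fun i => hv_l1 _ _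
  have hN : 0 < N := by positivity
  have hNA : N ≤ A 0 := hA0 ▸ le_max_right a N
  have haA : a ≤ A 0 := hA0 ▸ le_max_left a N
  refine ⟨average N u, fun s hs => haA.trans (le_of_mem_support_average hA hu hs),
    l1_average hA hu hl1 hN, ?_, fun F hF => ?_⟩
  · have := le_tsir_succ_average hA hu (fun i => ne_zero_of_l1_eq_one (hl1 i)) hN hNA
      fun i => hv_tsir (A i) (N * A i)
    rwa [pow_succ, ← div_eq_mul_one_div]
  · have h2 := mul_sum_abs_average_le_two hA hu hl1 hN (hNA.trans' hN)
      (fun i G hG => by exact_mod_cast hv_S (A i) (N * A i) G hG) hF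
    have h0 : 0 ≤ ∑ s ∈ F, |average N u s| := sum_nonneg fun _ _ => abs_nonneg _
    have : (N : ℝ) = 2 * (M + 1) := by simp [N]
    nlinarith

theorem exists_separatesLevels : ∀ j a M : ℕ, ∃ x, SeparatesLevels j a M x
  | 0 => exists_separatesLevels_zero
  | j + 1 => exists_separatesLevels_succ (exists_separatesLevels j)

theorem exists_l1_eq_one_mul_tsir_le_tsir_succ (k M : ℕ) :
    ∃ x : ℕ →₀ ℝ, l1 x = 1 ∧ 0 < tsir k x ∧ (M : ℝ) * tsir k x ≤ tsir (k + 1) x := by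
  obtain ⟨x, -, hl1, hlow, hS⟩ := exists_separatesLevels k 0 (2 ^ (k + 1) * M)
  obtain ⟨F, -, hF, heq⟩ := exists_sum_eq_schreierNorm k x
  have hup : (2 ^ (k + 1) * M : ℝ) * tsir k x ≤ 1 :=
    calc (2 ^ (k + 1) * M : ℝ) * tsir k x ≤ (2 ^ (k + 1) * M : ℝ) * schreierNorm k x := by
          gcongr; exact tsir_le_schreierNorm k x
      _ ≤ 1 := by exact_mod_cast heq ▸ hS F hF
  refine ⟨x, hl1, tsir_pos (ne_zero_of_l1_eq_one hl1) k, ?_⟩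
  calc (M : ℝ) * tsir k x = (1 / 2) ^ (k + 1) * ((2 ^ (k + 1) * M : ℝ) * tsir k x) := by
        rw [← mul_assoc, ← mul_assoc, ← mul_pow]; norm_num
    _ ≤ (1 / 2) ^ (k + 1) := mul_le_of_le_one_right (by positivity) hup
    _ ≤ tsir (k + 1) x := hlow

/-- `D_{n,k} ≤ 1` whenever `n ≤ k`, and `D_{n,k} ≥ k` whenever `n > k`. -/
theorem Dnk_le_one_and_ge (n k : ℕ) :
    (n ≤ k → Dnk n k ≤ 1) ∧ (k < n → (k : ℝ≥0∞) ≤ Dnk n k) := by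
  refine ⟨fun hnk => iSup_le fun x => ?_, fun hkn => ?_⟩
  · exact ENNReal.ofReal_le_one.2 (div_le_one_of_le₀ (tsir_mono x hnk) (tsir_nonneg k x))
  · obtain ⟨x, hl1, hpos, hle⟩ := exists_l1_eq_one_mul_tsir_le_tsir_succ k k
    have hratio : (k : ℝ) ≤ tsir n x / tsir k x :=
      (le_div_iff₀ hpos).2 (hle.trans (tsir_mono x hkn))
    calc (k : ℝ≥0∞) = ENNReal.ofReal k := (ENNReal.ofReal_natCast k).symm
      _ ≤ ENNReal.ofReal (tsir n x / tsir k x) := ENNReal.ofReal_le_ofReal hratio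
      _ ≤ Dnk n k := le_iSup (fun x : {x // l1 x = 1} => ENNReal.ofReal (tsir n x / tsir k x))
          ⟨x, hl1⟩
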